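/- (Lemma 5.7, discrete Laplace estimate on the simplex.) Let g ≥ 1, let f⋆ lie in the simplex 𝓔_g = {f ∈ ℝ^g : f_h ≥ 0 for all h, Σ_h f_h = 1}, and let κ > 0. Let F₂, F₁ : 𝓔_g → ℝ satisfy, for some constants c, C > 0 and all f ∈ 𝓔_g with |f - f⋆| ≤ κ: (i) |F₁(f) - F₁(f⋆)| ≤ C|f - f⋆|; (ii) F₂(f) - F₂(f⋆) ≤ -c|f - f⋆|²; (iii) |F₂(f) - F₂(f⋆)| ≤ C|f - f⋆|². Define for each positive integer K: L_K := Σ exp( K² F₂(N⃗/K) + K F₁(N⃗/K) ), the sum being over integer vectors N⃗ = (N₁,…,N_g) with nonnegative entries, Σ_h N_h = K, and |N⃗/K - f⋆| < κ. Then there exist constants c', C' > 0 such that for all sufficiently large K: c' · exp( K² F₂(f⋆) + K F₁(f⋆) ) ≤ L_K ≤ C' · exp( K² F₂(f⋆) + K F₁(f⋆) ). -/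

import Mathlib

/-!
Near `f⋆` the exponent `K² F₂ + K F₁` at `N⃗/K` differs from its value at `f⋆` by a quantity controlled
by `x = |N⃗ - K f⋆|`. For the lower bound, rounding `K f⋆` to a lattice point of the simplex gives a
single term with `x ≤ √g · g`, whose exponent is within `C (x² + x)` of the main one. For the upper
bound, the decay `-c x²` of `F₂` absorbs the linear error `C x` of `F₁` (AM-GM), so each term is at
most the main term times `exp (C² / 2c) · exp (-(c/2) x²)`; this Gaussian lattice sum factorizes
over the coordinates, and each one-dimensional sum is dominated by two geometric series.
-/

open Filter

noncomputable section

/-- Euclidean distance on `Fin g → ℝ`. -/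
def eucDist {g : ℕ} (f f' : Fin g → ℝ) : ℝ := Real.sqrt (∑ h, (f h - f' h) ^ 2)

/-- The sum `L_K = Σ_{N⃗} exp(K² F₂(N⃗/K) + K F₁(N⃗/K))` over integer vectors `N⃗` with
nonnegative entries summing to `K` and `|N⃗/K - f⋆| < κ`. -/
def simplexLaplaceSum (g : ℕ) (fstar : Fin g → ℝ) (κ : ℝ)
    (F₂ F₁ : (Fin g → ℝ) → ℝ) (K : ℕ) : ℝ :=
  ∑ Nv : Fin g → Fin (K + 1),
    Set.indicator
      {Nv : Fin g → Fin (K + 1) | (∑ h, ((Nv h : ℕ)) = K) ∧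
        eucDist (fun h => ((Nv h : ℕ) : ℝ) / (K : ℝ)) fstar < κ}
      (fun Nv => Real.exp ((K : ℝ) ^ 2 * F₂ (fun h => ((Nv h : ℕ) : ℝ) / (K : ℝ)) +
        (K : ℝ) * F₁ (fun h => ((Nv h : ℕ) : ℝ) / (K : ℝ)))) Nv

end

open Finset Real

theorem eucDist_sq {g : ℕ} (f f' : Fin g → ℝ) :
    eucDist f f' ^ 2 = ∑ h, (f h - f' h) ^ 2 :=
  sq_sqrt (sum_nonneg fun _ _ => sq_nonneg _)

theorem mul_eucDist_div {g : ℕ} (N y : Fin g → ℝ) {K : ℝ} (hK : 0 < K) :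
    K * eucDist (fun h => N h / K) y = eucDist N (fun h => K * y h) := by
  have hscale : ∑ h, (N h - K * y h) ^ 2 = K ^ 2 * ∑ h, (N h / K - y h) ^ 2 := by
    rw [mul_sum]
    refine sum_congr rfl fun h _ => ?_
    field_simp
  rw [eucDist, eucDist, hscale, sqrt_mul (sq_nonneg K), sqrt_sq hK.le]

theorem eucDist_le_sqrt_mul {g : ℕ} {f f' : Fin g → ℝ} {r : ℝ}
    (hr : ∀ h, |f h - f' h| ≤ r) : eucDist f f' ≤ √g * r := by
  rcases Nat.eq_zero_or_pos g with rfl | hg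
  · simp [eucDist]
  have hr0 : 0 ≤ r := (abs_nonneg _).trans (hr ⟨0, hg⟩)
  calc eucDist f f' ≤ √(∑ _h : Fin g, r ^ 2) :=
        sqrt_le_sqrt (sum_le_sum fun h _ => sq_le_sq' (abs_le.mp (hr h)).1 (abs_le.mp (hr h)).2)
    _ = √g * r := by
        rw [sum_const, card_univ, Fintype.card_fin, nsmul_eq_mul, sqrt_mul (Nat.cast_nonneg _),
          sqrt_sq hr0]

theorem sum_div_eq_one {ι : Type*} [Fintype ι] {N : ι → ℕ} {K : ℕ} (hN : ∑ i, N i = K)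
    (hK : K ≠ 0) : ∑ i, (N i : ℝ) / K = 1 := by
  rw [← sum_div, ← Nat.cast_sum, hN, div_self (Nat.cast_ne_zero.mpr hK)]

theorem exists_nat_sum_eq_abs_sub_le {ι : Type*} [Fintype ι] (x : ι → ℝ) (hx : ∀ i, 0 ≤ x i)
    (K : ℕ) (hsum : ∑ i, x i = K) :
    ∃ N : ι → ℕ, ∑ i, N i = K ∧ ∀ i, |N i - x i| ≤ Fintype.card ι := by
  classical
  rcases isEmpty_or_nonempty ι with hι | ⟨⟨i₀⟩⟩
  · refine ⟨0, ?_, isEmptyElim⟩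
    simpa [eq_comm] using hsum
  set s := univ.erase i₀
  set S := ∑ j ∈ s, ⌊x j⌋₊
  have hS : (S : ℝ) ≤ ∑ j ∈ s, x j := by
    push_cast [S]
    exact sum_le_sum fun j _ => Nat.floor_le (hx j)
  have hsplit : x i₀ + ∑ j ∈ s, x j = K := by rw [add_sum_erase _ _ (mem_univ i₀), hsum]
  have hSK : S ≤ K := by
    have : (S : ℝ) ≤ K := by linarith [hx i₀]
    exact_mod_cast this
  refine ⟨Function.update (fun i => ⌊x i⌋₊) i₀ (K - S), ?_, fun i => ?_⟩
  · rw [sum_update_of_mem (mem_univ i₀), ← erase_eq]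
    exact Nat.sub_add_cancel hSK
  have hcard : (s.card : ℝ) + 1 = Fintype.card ι := by
    rw [card_erase_of_mem (mem_univ _), card_univ,
      Nat.cast_sub (Fintype.card_pos_iff.mpr ⟨i₀⟩), Nat.cast_one]
    ring
  rcases eq_or_ne i i₀ with rfl | hi
  · have herr : ((K - S : ℕ) : ℝ) - x i = ∑ j ∈ s, (x j - ⌊x j⌋₊) := by
      rw [Nat.cast_sub hSK, sum_sub_distrib]
      push_cast [S]
      linarith
    have herr_le : ∑ j ∈ s, (x j - ⌊x j⌋₊) ≤ s.card := by
      simpa using sum_le_sum fun j (_ : j ∈ s) => (by linarith [Nat.lt_floor_add_one (x j)] :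
        x j - ⌊x j⌋₊ ≤ 1)
    have herr_nonneg : 0 ≤ ∑ j ∈ s, (x j - ⌊x j⌋₊) :=
      sum_nonneg fun j _ => sub_nonneg.mpr (Nat.floor_le (hx j))
    rw [Function.update_self, herr, abs_of_nonneg herr_nonneg]
    linarith
  · rw [Function.update_of_ne hi, abs_le]
    constructor <;>
      linarith [Nat.floor_le (hx i), Nat.lt_floor_add_one (x i), s.card.cast_nonneg (α := ℝ)]

theorem sum_pow_le_of_injOn {r : ℝ} (hr0 : 0 ≤ r) (hr1 : r < 1) (s : Finset ℕ) {φ : ℕ → ℕ}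
    (hφ : Set.InjOn φ s) : ∑ n ∈ s, r ^ φ n ≤ (1 - r)⁻¹ := by
  classical
  rw [← sum_image hφ, ← tsum_geometric_of_lt_one hr0 hr1]
  exact (summable_geometric_of_lt_one hr0 hr1).sum_le_tsum _ fun n _ => pow_nonneg hr0 n

theorem exp_neg_mul_sq_le {t : ℝ} (ht : 0 ≤ t) {u : ℝ} {k : ℕ} (hk : k ≤ |u| + 1) :
    exp (-(t * u ^ 2)) ≤ exp (3 * t / 2) * exp (-t) ^ k := by
  rw [← exp_nat_mul, ← exp_add, exp_le_exp]
  have hk' : (k : ℝ) ≤ u ^ 2 + 3 / 2 := by nlinarith [sq_abs u, sq_nonneg (|u| - 1 / 2)]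
  nlinarith

theorem sum_exp_neg_mul_sq_le_of_injOn {t : ℝ} (ht : 0 < t) (a : ℝ) (s : Finset ℕ) {φ : ℕ → ℕ}
    (hφ : Set.InjOn φ s) (hφa : ∀ n ∈ s, (φ n : ℝ) ≤ |n - a| + 1) :
    ∑ n ∈ s, exp (-(t * (n - a) ^ 2)) ≤ exp (3 * t / 2) * (1 - exp (-t))⁻¹ :=
  calc ∑ n ∈ s, exp (-(t * (n - a) ^ 2)) ≤ ∑ n ∈ s, exp (3 * t / 2) * exp (-t) ^ φ n :=
        sum_le_sum fun n hn => exp_neg_mul_sq_le ht.le (hφa n hn)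
    _ = exp (3 * t / 2) * ∑ n ∈ s, exp (-t) ^ φ n := (mul_sum _ _ _).symm
    _ ≤ exp (3 * t / 2) * (1 - exp (-t))⁻¹ :=
        mul_le_mul_of_nonneg_left
          (sum_pow_le_of_injOn (exp_pos _).le (exp_lt_one_iff.mpr (by linarith)) s hφ)
          (exp_pos _).le

noncomputable def gaussSumBound (t : ℝ) : ℝ := 2 * (exp (3 * t / 2) * (1 - exp (-t))⁻¹)

theorem gaussSumBound_pos {t : ℝ} (ht : 0 < t) : 0 < gaussSumBound t := by
  have : 0 < 1 - exp (-t) := sub_pos.mpr (exp_lt_one_iff.mpr (neg_lt_zero.mpr ht))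
  unfold gaussSumBound
  positivity

theorem sum_range_exp_neg_mul_sq_le {t : ℝ} (ht : 0 < t) (a : ℝ) (m : ℕ) :
    ∑ n ∈ range m, exp (-(t * (n - a) ^ 2)) ≤ gaussSumBound t := by
  set b := ⌊a⌋₊
  rw [← sum_filter_add_sum_filter_not (range m) (· < b), gaussSumBound, two_mul]
  gcongr
  · refine sum_exp_neg_mul_sq_le_of_injOn ht a _ (φ := (b - ·)) ?_ fun n hn => ?_
    · intro n hn n' hn' (h : b - n = b - n')
      rw [mem_coe, mem_filter] at hn hn'
      omega
    · have hnb : n < b := (mem_filter.mp hn).2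
      have hba : (b : ℝ) ≤ a := Nat.floor_le (zero_le_one.trans (Nat.floor_pos.mp (by omega)))
      rw [Nat.cast_sub hnb.le]
      linarith [neg_abs_le ((n : ℝ) - a)]
  · refine sum_exp_neg_mul_sq_le_of_injOn ht a _ (φ := (· - b)) ?_ fun n hn => ?_
    · intro n hn n' hn' (h : n - b = n' - b)
      rw [mem_coe, mem_filter] at hn hn'
      omega
    · have hbn : b ≤ n := not_lt.mp (mem_filter.mp hn).2
      rw [Nat.cast_sub hbn]
      linarith [le_abs_self ((n : ℝ) - a), Nat.lt_floor_add_one a]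

theorem sum_pi_exp_neg_mul_sum_sq_le {ι : Type*} [Fintype ι] [DecidableEq ι] {t : ℝ} (ht : 0 < t)
    (a : ι → ℝ) (m : ℕ) :
    ∑ N : ι → Fin m, exp (-(t * ∑ i, ((N i : ℕ) - a i) ^ 2)) ≤
      gaussSumBound t ^ Fintype.card ι :=
  calc ∑ N : ι → Fin m, exp (-(t * ∑ i, ((N i : ℕ) - a i) ^ 2))
      = ∏ i, ∑ n : Fin m, exp (-(t * ((n : ℕ) - a i) ^ 2)) := by
        rw [Fintype.prod_sum]
        refine sum_congr rfl fun N _ => ?_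
        rw [mul_sum, ← sum_neg_distrib, exp_sum]
    _ ≤ ∏ _i : ι, gaussSumBound t :=
        prod_le_prod (fun i _ => sum_nonneg fun n _ => (exp_pos _).le) fun i _ =>
          (Fin.sum_univ_eq_sum_range (fun n => exp (-(t * (n - a i) ^ 2))) m).trans_le
            (sum_range_exp_neg_mul_sq_le ht (a i) m)
    _ = gaussSumBound t ^ Fintype.card ι := by rw [prod_const, card_univ]

section

variable {g : ℕ} {fstar : Fin g → ℝ} {κ : ℝ} {F₂ F₁ : (Fin g → ℝ) → ℝ} {c C : ℝ}

theorem simplexLaplaceSum_le (hc : 0 < c)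
    (h₁ : ∀ f : Fin g → ℝ, (∀ h, 0 ≤ f h) → ∑ h, f h = 1 → eucDist f fstar ≤ κ →
      |F₁ f - F₁ fstar| ≤ C * eucDist f fstar)
    (h₂ : ∀ f : Fin g → ℝ, (∀ h, 0 ≤ f h) → ∑ h, f h = 1 → eucDist f fstar ≤ κ →
      F₂ f - F₂ fstar ≤ -c * eucDist f fstar ^ 2)
    {K : ℕ} (hK : K ≠ 0) :
    simplexLaplaceSum g fstar κ F₂ F₁ K ≤
      exp (C ^ 2 / (2 * c)) * gaussSumBound (c / 2) ^ g *
        exp ((K : ℝ) ^ 2 * F₂ fstar + (K : ℝ) * F₁ fstar) := by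
  set E := (K : ℝ) ^ 2 * F₂ fstar + (K : ℝ) * F₁ fstar
  have hK0 : (0 : ℝ) < K := by positivity
  rw [simplexLaplaceSum]
  calc _ ≤ ∑ Nv : Fin g → Fin (K + 1), exp (E + C ^ 2 / (2 * c)) *
          exp (-(c / 2 * ∑ h, (((Nv h : ℕ) : ℝ) - K * fstar h) ^ 2)) := by
        refine sum_le_sum fun Nv _ => Set.indicator_apply_le' (fun ⟨hsum, hdist⟩ => ?_)
          fun _ => by positivity
        set f : Fin g → ℝ := fun h => ((Nv h : ℕ) : ℝ) / K
        have hf0 : ∀ h, 0 ≤ f h := fun h => by positivity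
        have hf1 : ∑ h, f h = 1 := sum_div_eq_one hsum hK
        set x := K * eucDist f fstar with hx_def
        have hx : x ^ 2 = ∑ h, (((Nv h : ℕ) : ℝ) - K * fstar h) ^ 2 := by
          rw [hx_def, mul_eucDist_div _ _ hK0, eucDist_sq]
        have e₂ := mul_le_mul_of_nonneg_left (h₂ f hf0 hf1 hdist.le) (sq_nonneg (K : ℝ))
        have e₁ := mul_le_mul_of_nonneg_left (abs_le.mp (h₁ f hf0 hf1 hdist.le)).2 hK0.le
        -- AM-GM: `C x ≤ (c/2) x² + C² / (2c)`, so half of the Gaussian decay survives.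
        have amgm : C * x ≤ c / 2 * x ^ 2 + C ^ 2 / (2 * c) := by
          have : 0 ≤ (c * x - C) ^ 2 / (2 * c) := by positivity
          have : (c * x - C) ^ 2 / (2 * c) = c / 2 * x ^ 2 + C ^ 2 / (2 * c) - C * x := by
            field_simp
            ring
          linarith
        rw [← exp_add, exp_le_exp, ← hx]
        nlinarith
    _ = exp (E + C ^ 2 / (2 * c)) * ∑ Nv : Fin g → Fin (K + 1),
          exp (-(c / 2 * ∑ h, (((Nv h : ℕ) : ℝ) - K * fstar h) ^ 2)) := (mul_sum _ _ _).symm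
    _ ≤ exp (E + C ^ 2 / (2 * c)) * gaussSumBound (c / 2) ^ g := by
        gcongr
        simpa using sum_pi_exp_neg_mul_sum_sq_le (half_pos hc) (fun h => K * fstar h) (K + 1)
    _ = exp (C ^ 2 / (2 * c)) * gaussSumBound (c / 2) ^ g * exp E := by
        rw [exp_add]
        ring

theorem exp_mul_le_simplexLaplaceSum (hfpos : ∀ h, 0 ≤ fstar h) (hfsum : ∑ h, fstar h = 1)
    (hC : 0 ≤ C)
    (h₁ : ∀ f : Fin g → ℝ, (∀ h, 0 ≤ f h) → ∑ h, f h = 1 → eucDist f fstar ≤ κ →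
      |F₁ f - F₁ fstar| ≤ C * eucDist f fstar)
    (h₃ : ∀ f : Fin g → ℝ, (∀ h, 0 ≤ f h) → ∑ h, f h = 1 → eucDist f fstar ≤ κ →
      |F₂ f - F₂ fstar| ≤ C * eucDist f fstar ^ 2)
    {K : ℕ} (hK : √g * g < K * κ) :
    exp (-(C * ((√g * g) ^ 2 + √g * g))) * exp ((K : ℝ) ^ 2 * F₂ fstar + (K : ℝ) * F₁ fstar) ≤
      simplexLaplaceSum g fstar κ F₂ F₁ K := by
  set B := √g * g
  have hK0 : (0 : ℝ) < K := by
    refine lt_of_le_of_ne K.cast_nonneg fun h => ?_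
    rw [← h, zero_mul] at hK
    exact hK.not_ge (by positivity)
  obtain ⟨N, hNsum, hNclose⟩ := exists_nat_sum_eq_abs_sub_le (fun h => K * fstar h)
    (fun h => mul_nonneg hK0.le (hfpos h)) K (by rw [← mul_sum, hfsum, mul_one])
  rw [Fintype.card_fin] at hNclose
  have hNle : ∀ h, N h < K + 1 := fun h =>
    Nat.lt_succ_of_le (hNsum ▸ single_le_sum (fun _ _ => Nat.zero_le _) (mem_univ h))
  set f : Fin g → ℝ := fun h => (N h : ℝ) / K
  have hf0 : ∀ h, 0 ≤ f h := fun h => by positivity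
  have hf1 : ∑ h, f h = 1 := sum_div_eq_one hNsum (Nat.cast_pos.mp hK0).ne'
  have hx : K * eucDist f fstar ≤ B := by
    rw [mul_eucDist_div _ _ hK0]
    exact eucDist_le_sqrt_mul hNclose
  have hd : eucDist f fstar < κ := lt_of_mul_lt_mul_left (hx.trans_lt hK) hK0.le
  have hexp : (K : ℝ) ^ 2 * F₂ fstar + K * F₁ fstar - C * (B ^ 2 + B) ≤
      (K : ℝ) ^ 2 * F₂ f + K * F₁ f := by
    have e₂ := mul_le_mul_of_nonneg_left (abs_le.mp (h₃ f hf0 hf1 hd.le)).1 (sq_nonneg (K : ℝ))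
    have e₁ := mul_le_mul_of_nonneg_left (abs_le.mp (h₁ f hf0 hf1 hd.le)).1 hK0.le
    have hx0 : 0 ≤ K * eucDist f fstar := mul_nonneg hK0.le (sqrt_nonneg _)
    nlinarith [mul_le_mul_of_nonneg_left hx hC,
      mul_le_mul_of_nonneg_left (pow_le_pow_left₀ hx0 hx 2) hC]
  set Nv : Fin g → Fin (K + 1) := fun h => ⟨N h, hNle h⟩
  rw [simplexLaplaceSum, ← exp_add]
  refine le_trans ?_ (single_le_sum
    (fun Nv _ => Set.indicator_nonneg (fun _ _ => (exp_pos _).le) Nv) (mem_univ Nv))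
  rw [Set.indicator_of_mem ?mem, exp_le_exp]
  · linarith
  · exact ⟨hNsum, hd⟩

end

theorem simplex_laplace_estimate_general (g : ℕ)
    (fstar : Fin g → ℝ) (hfpos : ∀ h, 0 ≤ fstar h) (hfsum : ∑ h, fstar h = 1)
    (κ : ℝ) (hκ : 0 < κ) (F₂ F₁ : (Fin g → ℝ) → ℝ)
    (c C : ℝ) (hc : 0 < c) (hC : 0 < C)
    (h₁ : ∀ f : Fin g → ℝ, (∀ h, 0 ≤ f h) → ∑ h, f h = 1 → eucDist f fstar ≤ κ →
      |F₁ f - F₁ fstar| ≤ C * eucDist f fstar)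
    (h₂ : ∀ f : Fin g → ℝ, (∀ h, 0 ≤ f h) → ∑ h, f h = 1 → eucDist f fstar ≤ κ →
      F₂ f - F₂ fstar ≤ -c * eucDist f fstar ^ 2)
    (h₃ : ∀ f : Fin g → ℝ, (∀ h, 0 ≤ f h) → ∑ h, f h = 1 → eucDist f fstar ≤ κ →
      |F₂ f - F₂ fstar| ≤ C * eucDist f fstar ^ 2) :
    ∃ c' C' : ℝ, 0 < c' ∧ 0 < C' ∧ ∃ K₀ : ℕ, ∀ K : ℕ, K₀ ≤ K →
      c' * Real.exp ((K : ℝ) ^ 2 * F₂ fstar + (K : ℝ) * F₁ fstar) ≤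
        simplexLaplaceSum g fstar κ F₂ F₁ K ∧
      simplexLaplaceSum g fstar κ F₂ F₁ K ≤
        C' * Real.exp ((K : ℝ) ^ 2 * F₂ fstar + (K : ℝ) * F₁ fstar) := by
  obtain ⟨K₀, hK₀⟩ := exists_nat_gt (√g * g / κ)
  have hbound := gaussSumBound_pos (half_pos hc)
  refine ⟨exp (-(C * ((√g * g) ^ 2 + √g * g))), exp (C ^ 2 / (2 * c)) * gaussSumBound (c / 2) ^ g,
    exp_pos _, by positivity, K₀, fun K hK => ?_⟩
  have hBK : √g * g < K * κ := ((div_lt_iff₀ hκ).mp hK₀).trans_le (by gcongr)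
  have hK0 : K ≠ 0 := by
    rintro rfl
    exact hBK.not_ge (by simp only [CharP.cast_eq_zero, zero_mul]; positivity)
  exact ⟨exp_mul_le_simplexLaplaceSum hfpos hfsum hC.le h₁ h₃ hBK,
    simplexLaplaceSum_le hc h₁ h₂ hK0⟩

/-- Lemma 5.7: discrete Laplace estimate on the simplex:
`L_K ≍ exp(K² F₂(f⋆) + K F₁(f⋆))` for large `K`. -/
theorem simplex_laplace_estimate (g : ℕ) (hg : 1 ≤ g)
    (fstar : Fin g → ℝ) (hfpos : ∀ h, 0 ≤ fstar h) (hfsum : ∑ h, fstar h = 1)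
    (κ : ℝ) (hκ : 0 < κ) (F₂ F₁ : (Fin g → ℝ) → ℝ)
    (c C : ℝ) (hc : 0 < c) (hC : 0 < C)
    (h₁ : ∀ f : Fin g → ℝ, (∀ h, 0 ≤ f h) → ∑ h, f h = 1 → eucDist f fstar ≤ κ →
      |F₁ f - F₁ fstar| ≤ C * eucDist f fstar)
    (h₂ : ∀ f : Fin g → ℝ, (∀ h, 0 ≤ f h) → ∑ h, f h = 1 → eucDist f fstar ≤ κ →
      F₂ f - F₂ fstar ≤ -c * eucDist f fstar ^ 2)
    (h₃ : ∀ f : Fin g → ℝ, (∀ h, 0 ≤ f h) → ∑ h, f h = 1 → eucDist f fstar ≤ κ →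
      |F₂ f - F₂ fstar| ≤ C * eucDist f fstar ^ 2) :
    ∃ c' C' : ℝ, 0 < c' ∧ 0 < C' ∧ ∃ K₀ : ℕ, ∀ K : ℕ, K₀ ≤ K →
      c' * Real.exp ((K : ℝ) ^ 2 * F₂ fstar + (K : ℝ) * F₁ fstar) ≤
        simplexLaplaceSum g fstar κ F₂ F₁ K ∧
      simplexLaplaceSum g fstar κ F₂ F₁ K ≤
        C' * Real.exp ((K : ℝ) ^ 2 * F₂ fstar + (K : ℝ) * F₁ fstar) :=
  simplex_laplace_estimate_general g fstar hfpos hfsum κ hκ F₂ F₁ c C hc hC h₁ h₂ h₃
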